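/- Let (X,d) be a metric space, Y ⊆ X a subset with a metric d_Y satisfying d(x,y) ≤ d_Y(x,y) ≤ Λ·d(x,y) for all x,y ∈ Y, where Λ ≥ 1. Suppose for the metric d_Y, every d_Y-ball of radius s in Y can be covered by N_Y d_Y-balls of radius s/2 centered in Y. Then for any natural number m with 2^m > 2Λ, every set of the form B_d(p,r) ∩ Y (p ∈ X, r > 0) nonempty can be covered by N_Y^(m+1) sets of the form B_d(x,r/2) with centers x ∈ Y. -/

import Mathlib

/-!
Cover the intrinsic ball of radius `2 ^ m * r` around a point `y₀ ∈ B(p, r) ∩ Y` by iterating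
the doubling hypothesis `m + 1` times, which yields `N_Y ^ (m + 1)` intrinsic balls of radius
`r / 2`. Since `d ≤ d_Y ≤ Λ d` and `2 Λ < 2 ^ m`, that intrinsic ball contains `B(p, r) ∩ Y`, and
each intrinsic ball of radius `r / 2` lies in the ambient ball of the same radius.
-/

open Set

theorem subset_iUnion_finProdFinEquiv {α : Type*} {a b : ℕ} {S : Set α} {A : Fin a → Set α}
    {B : Fin a → Fin b → Set α} (hS : S ⊆ ⋃ i, A i) (hA : ∀ i, A i ⊆ ⋃ j, B i j) :
    S ⊆ ⋃ l : Fin (a * b), B (finProdFinEquiv.symm l).1 (finProdFinEquiv.symm l).2 := by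
  intro x hx
  obtain ⟨_, ⟨i, rfl⟩, hxi⟩ := hS hx
  obtain ⟨_, ⟨j, rfl⟩, hxj⟩ := hA i hxi
  exact mem_iUnion.2 ⟨finProdFinEquiv (i, j), by simpa using hxj⟩

theorem exists_cover_pow_of_cover_half {Y : Type*} (dY : Y → Y → ℝ) (N : ℕ)
    (hN : ∀ (y : Y) (s : ℝ), 0 < s → ∃ c : Fin N → Y,
      {z : Y | dY y z < s} ⊆ ⋃ i, {z : Y | dY (c i) z < s / 2})
    (k : ℕ) (y : Y) {t : ℝ} (ht : 0 < t) :
    ∃ c : Fin (N ^ k) → Y, {z : Y | dY y z < 2 ^ k * t} ⊆ ⋃ i, {z : Y | dY (c i) z < t} := by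
  induction k generalizing y with
  | zero => exact ⟨fun _ => y, fun z hz => mem_iUnion.2 ⟨⟨0, by simp⟩, by simpa using hz⟩⟩
  | succ k ih =>
    obtain ⟨c, hc⟩ := hN y (2 ^ (k + 1) * t) (by positivity)
    choose d hd using fun i => ih (c i)
    have hhalf : (2 : ℝ) ^ (k + 1) * t / 2 = 2 ^ k * t := by ring
    rw [hhalf] at hc
    rw [pow_succ']
    exact ⟨_, subset_iUnion_finProdFinEquiv hc hd⟩

/-- Extrinsic packing from intrinsic packing via the distortion `Λ`
(connected case of Lemma 3.1). -/
theorem extrinsic_packing_of_intrinsic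
    {X : Type*} [MetricSpace X] (Y : Set X) (dY : Y → Y → ℝ)
    (Λ : ℝ) (hΛ : 1 ≤ Λ)
    (hlow : ∀ x y : Y, dist (x : X) (y : X) ≤ dY x y)
    (hup : ∀ x y : Y, dY x y ≤ Λ * dist (x : X) (y : X))
    (NY : ℕ)
    (hNY : ∀ (y : Y) (s : ℝ), 0 < s → ∃ c : Fin NY → Y,
      {z : Y | dY y z < s} ⊆ ⋃ i, {z : Y | dY (c i) z < s / 2})
    (m : ℕ) (hm : 2 * Λ < 2 ^ m) :
    ∀ (p : X) (r : ℝ), 0 < r → (Metric.ball p r ∩ Y).Nonempty →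
      ∃ c : Fin (NY ^ (m + 1)) → Y,
        Metric.ball p r ∩ Y ⊆ ⋃ i, Metric.ball ((c i : X)) (r / 2) := by
  rintro p r hr ⟨y₀, hy₀p, hy₀Y⟩
  obtain ⟨c, hc⟩ := exists_cover_pow_of_cover_half dY NY hNY (m + 1) ⟨y₀, hy₀Y⟩ (half_pos hr)
  refine ⟨c, fun z ⟨hzp, hzY⟩ => ?_⟩
  have hy₀z : dist y₀ z < 2 * r := by
    rw [Metric.mem_ball'] at hy₀p hzp
    linarith [dist_triangle_left y₀ z p]
  have hdY : dY ⟨y₀, hy₀Y⟩ ⟨z, hzY⟩ < 2 ^ (m + 1) * (r / 2) := by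
    calc dY ⟨y₀, hy₀Y⟩ ⟨z, hzY⟩ ≤ Λ * dist y₀ z := hup _ _
      _ ≤ Λ * (2 * r) := by gcongr
      _ < 2 ^ m * r := by linarith [mul_lt_mul_of_pos_right hm hr]
      _ = 2 ^ (m + 1) * (r / 2) := by ring
  obtain ⟨_, ⟨i, rfl⟩, hi⟩ := hc hdY
  exact mem_iUnion.2 ⟨i, Metric.mem_ball.2 <| (dist_comm _ _).trans_le (hlow _ _) |>.trans_lt hi⟩
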